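/- Let Ω be an open subset of X. If S_t φ = S^D_t φ for all φ ∈ L₂(Ω) and all t > 0, then the relative capacity of the boundary of Ω vanishes: cap_Ω(∂Ω) = 0. -/

import Mathlib

open MeasureTheory Filter Topology Set ENNReal
open scoped ENNReal

namespace DirichletPaper

variable {X : Type*} [MeasurableSpace X]

/-- The unit cut-off `0 ∨ φ ∧ 1`. -/
def cut (φ : X → ℝ) : X → ℝ := fun x => max 0 (min (φ x) 1)

/-- A symmetric Dirichlet form on `L₂(X, μ)`, modelled on genuine functions with
all identifications made almost everywhere. -/
structure DirichletForm (μ : Measure X) where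
  dom : Set (X → ℝ)
  form : (X → ℝ) → (X → ℝ) → ℝ
  dom_memLp : ∀ φ ∈ dom, MemLp φ 2 μ
  zero_mem : (0 : X → ℝ) ∈ dom
  add_mem : ∀ φ ∈ dom, ∀ ψ ∈ dom, φ + ψ ∈ dom
  smul_mem : ∀ (c : ℝ), ∀ φ ∈ dom, c • φ ∈ dom
  mul_mem : ∀ φ ∈ dom, ∀ ψ ∈ dom, (∃ C, ∀ᵐ x ∂μ, |φ x| ≤ C) →
    (∃ C, ∀ᵐ x ∂μ, |ψ x| ≤ C) → φ * ψ ∈ dom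
  congr_mem : ∀ φ ∈ dom, ∀ ψ : X → ℝ, ψ =ᵐ[μ] φ → ψ ∈ dom
  congr_form : ∀ φ ∈ dom, ∀ ψ ∈ dom, ∀ φ' ∈ dom, ∀ ψ' ∈ dom, φ' =ᵐ[μ] φ → ψ' =ᵐ[μ] ψ →
    form φ' ψ' = form φ ψ
  symm : ∀ φ ψ, form φ ψ = form ψ φ
  add_left : ∀ φ ∈ dom, ∀ ψ ∈ dom, ∀ χ ∈ dom, form (φ + ψ) χ = form φ χ + form ψ χ
  smul_left : ∀ (c : ℝ), ∀ φ ∈ dom, ∀ ψ ∈ dom, form (c • φ) ψ = c * form φ ψ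
  nonneg : ∀ φ ∈ dom, 0 ≤ form φ φ
  closed : ∀ (f : ℕ → X → ℝ) (φ : X → ℝ), (∀ n, f n ∈ dom) → MemLp φ 2 μ →
    Tendsto (fun n => eLpNorm (f n - φ) 2 μ) atTop (𝓝 0) →
    (∀ ε > 0, ∃ N, ∀ m ≥ N, ∀ n ≥ N, form (f m - f n) (f m - f n) < ε) →
    φ ∈ dom ∧ Tendsto (fun n => form (f n - φ) (f n - φ)) atTop (𝓝 0)
  markov : ∀ φ ∈ dom, cut φ ∈ dom ∧ form (cut φ) (cut φ) ≤ form φ φ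

variable {μ : Measure X}

/-- The quadratic form associated with a Dirichlet form. -/
def DirichletForm.q (E : DirichletForm μ) : (X → ℝ) → ℝ := fun φ => E.form φ φ

/-- Locality: `E(ψ,φ) = 0` whenever `φ ψ = 0`. -/
def IsLocal (E : DirichletForm μ) : Prop :=
  ∀ φ ∈ E.dom, ∀ ψ ∈ E.dom, (∀ᵐ x ∂μ, φ x * ψ x = 0) → E.form ψ φ = 0

/-- Strong locality: `E(φ,ψ) = 0` whenever `(φ + a 1) ψ = 0`. -/
def IsStronglyLocal (E : DirichletForm μ) : Prop :=
  ∀ φ ∈ E.dom, ∀ ψ ∈ E.dom, ∀ a : ℝ, (∀ᵐ x ∂μ, (φ x + a) * ψ x = 0) → E.form φ ψ = 0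

/-- `D(E) ∩ C_c(X)` is dense in `C₀(X)` for the supremum norm. -/
def DenseInC0 [TopologicalSpace X] (E : DirichletForm μ) : Prop :=
  ∀ g : X → ℝ, Continuous g → Tendsto g (cocompact X) (𝓝 0) → ∀ ε > 0,
    ∃ φ ∈ E.dom, Continuous φ ∧ HasCompactSupport φ ∧ ∀ x, |φ x - g x| < ε

/-- Regularity: `D(E) ∩ C_c(X)` is dense in `C₀(X)` (sup norm) and in `D(E)` (graph norm). -/
def IsRegular [TopologicalSpace X] (E : DirichletForm μ) : Prop :=
  DenseInC0 E ∧ ∀ φ ∈ E.dom, ∀ ε > 0, ∃ ψ ∈ E.dom, Continuous ψ ∧ HasCompactSupport ψ ∧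
    (∫ x, (φ x - ψ x) ^ 2 ∂μ) + E.form (φ - ψ) (φ - ψ) < ε

/-- The squared graph norm `‖φ‖₂² + q(φ)` of a quadratic form `q`. -/
noncomputable def graphNormSq (μ : Measure X) (q : (X → ℝ) → ℝ) (φ : X → ℝ) : ℝ :=
  (∫ x, φ x ^ 2 ∂μ) + q φ

/-- `D_Ω`: the elements of the domain whose support is a compact subset of `Ω`. -/
def DOmegaGen [TopologicalSpace X] (dom : Set (X → ℝ)) (Ω : Set X) : Set (X → ℝ) :=
  {φ ∈ dom | IsCompact (tsupport φ) ∧ tsupport φ ⊆ Ω}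

/-- `D(E_D)`: the closure of `D_Ω` with respect to the graph norm. -/
def domDGen [TopologicalSpace X] (μ : Measure X) (dom : Set (X → ℝ)) (q : (X → ℝ) → ℝ)
    (Ω : Set X) : Set (X → ℝ) :=
  {φ ∈ dom | ∃ f : ℕ → X → ℝ, (∀ n, f n ∈ DOmegaGen dom Ω) ∧
    Tendsto (fun n => graphNormSq μ q (f n - φ)) atTop (𝓝 0)}

/-- The domain of the Dirichlet restriction `E_D` of `E` to an open set `Ω`. -/
def DirichletForm.domD [TopologicalSpace X] (E : DirichletForm μ) (Ω : Set X) :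
    Set (X → ℝ) :=
  domDGen μ E.dom E.q Ω

/-- The relative capacity `cap_Ω(A)` of `A ⊆ closure Ω` with respect to a form
with domain `dom` and quadratic part `q`. -/
noncomputable def relCap [TopologicalSpace X] (μ : Measure X) (dom : Set (X → ℝ))
    (q : (X → ℝ) → ℝ) (Ω A : Set X) : ℝ≥0∞ :=
  sInf {r : ℝ≥0∞ | ∃ φ ∈ dom, ∃ V : Set X, IsOpen V ∧ A ⊆ V ∧
    (∀ᵐ x ∂μ, x ∈ V ∩ Ω → 1 ≤ φ x) ∧ r = ENNReal.ofReal (graphNormSq μ q φ)}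

/-- Membership of `L₂(Ω)`, identified with `{1_Ω φ : φ ∈ L₂(X)} ⊆ L₂(X)`. -/
def MemL2 (μ : Measure X) (Ω : Set X) (φ : X → ℝ) : Prop :=
  MemLp φ 2 μ ∧ φ =ᵐ[μ] Ω.indicator φ

/-- A semigroup on `L₂(Y)` (extended to `L₂(X)` by `S_t φ = S_t (1_Y φ)`) is conservative
if `S_t 1_Y = 1_Y` for all `t > 0`. -/
def ConservativeOn (μ : Measure X) (Y : Set X) (S : ℝ → (X → ℝ) → (X → ℝ)) : Prop :=
  ∀ t > 0, S t (Y.indicator fun _ => (1 : ℝ)) =ᵐ[μ] Y.indicator fun _ => (1 : ℝ)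

/-- `S` is the submarkovian semigroup on `L₂(Y)`, extended to `L₂(X)` by
`S_t φ = S_t (1_Y φ)`, associated with the (Dirichlet) form with domain `dom` and
quadratic part `q`; the association is expressed by the standard characterisation
`q(φ) = lim_{t ↓ 0} t⁻¹ (φ, (I - S_t) φ)` with domain the set where the quotients
stay bounded.  The extension of `S` to `L_∞` is pinned down by monotone continuity. -/
structure IsSubmarkovSemigroupOn (μ : Measure X) (Y : Set X) (dom : Set (X → ℝ))
    (q : (X → ℝ) → ℝ) (S : ℝ → (X → ℝ) → (X → ℝ)) : Prop where
  proj : ∀ t > 0, ∀ φ : X → ℝ, S t φ =ᵐ[μ] S t (Y.indicator φ)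
  supported : ∀ t > 0, ∀ φ : X → ℝ, MemLp φ 2 μ → S t φ =ᵐ[μ] Y.indicator (S t φ)
  memLp : ∀ t > 0, ∀ φ : X → ℝ, MemLp φ 2 μ → MemLp (S t φ) 2 μ
  map_add : ∀ t > 0, ∀ φ ψ : X → ℝ, MemLp φ 2 μ → MemLp ψ 2 μ →
    S t (φ + ψ) =ᵐ[μ] S t φ + S t ψ
  map_smul : ∀ t > 0, ∀ (c : ℝ), ∀ φ : X → ℝ, MemLp φ 2 μ → S t (c • φ) =ᵐ[μ] c • S t φ
  semigroup : ∀ s > 0, ∀ t > 0, ∀ φ : X → ℝ, MemLp φ 2 μ →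
    S (s + t) φ =ᵐ[μ] S s (S t φ)
  symmetric : ∀ t > 0, ∀ φ ψ : X → ℝ, MemLp φ 2 μ → MemLp ψ 2 μ →
    ∫ x, S t φ x * ψ x ∂μ = ∫ x, φ x * S t ψ x ∂μ
  contraction : ∀ t > 0, ∀ φ : X → ℝ, MemLp φ 2 μ → eLpNorm (S t φ) 2 μ ≤ eLpNorm φ 2 μ
  submarkov : ∀ t > 0, ∀ φ : X → ℝ, (∀ᵐ x ∂μ, 0 ≤ φ x ∧ φ x ≤ 1) →
    ∀ᵐ x ∂μ, 0 ≤ S t φ x ∧ S t φ x ≤ 1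
  mono : ∀ t > 0, ∀ φ ψ : X → ℝ, φ ≤ᵐ[μ] ψ → S t φ ≤ᵐ[μ] S t ψ
  mono_cont : ∀ t > 0, ∀ (f : ℕ → X → ℝ) (φ : X → ℝ), (∀ n, f n ≤ᵐ[μ] f (n + 1)) →
    (∀ᵐ x ∂μ, Tendsto (fun n => f n x) atTop (𝓝 (φ x))) →
    ∀ᵐ x ∂μ, Tendsto (fun n => S t (f n) x) atTop (𝓝 (S t φ x))
  strong_cont : ∀ φ : X → ℝ, MemLp φ 2 μ →
    Tendsto (fun t => eLpNorm (S t φ - Y.indicator φ) 2 μ) (𝓝[>] 0) (𝓝 0)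
  mem_dom_iff : ∀ φ : X → ℝ, MemLp φ 2 μ → φ =ᵐ[μ] Y.indicator φ →
    ((∃ ψ ∈ dom, φ =ᵐ[μ] ψ) ↔
      BddAbove {r : ℝ | ∃ t > 0, r = t⁻¹ * ∫ x, φ x * (φ x - S t φ x) ∂μ})
  form_eq : ∀ φ ∈ dom, Tendsto (fun t : ℝ => t⁻¹ * ∫ x, φ x * (φ x - S t φ x) ∂μ)
    (𝓝[>] 0) (𝓝 (q φ))

/-- The truncated form `E_χ(φ) = E(χ φ, φ) - 2⁻¹ E(χ, φ²)` on `D(E) ∩ L_∞`. -/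
noncomputable def trunc (E : DirichletForm μ) (χ φ : X → ℝ) : ℝ :=
  E.form (χ * φ) φ - 2⁻¹ * E.form χ (φ * φ)

/-- The bounded truncations of `φ` used to extend `E_χ` by continuity to `D(E)`. -/
noncomputable def truncClip (E : DirichletForm μ) (χ φ : X → ℝ) (m : ℕ) : ℝ :=
  trunc E χ (fun x => max (-(m : ℝ)) (min (φ x) (m : ℝ)))

/-- The extension by continuity of the truncated form `E_χ` to all of `D(E)`. -/
noncomputable def truncExt (E : DirichletForm μ) (χ φ : X → ℝ) : ℝ :=
  limUnder atTop (truncClip E χ φ)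

/-- The convex set `C_Ω = {χ ∈ D(E) ∩ L_∞(X) : 0 ≤ χ ≤ 1_Ω}`. -/
def CSet (E : DirichletForm μ) (Ω : Set X) : Set (X → ℝ) :=
  {χ ∈ E.dom | ∀ᵐ x ∂μ, 0 ≤ χ x ∧ χ x ≤ Ω.indicator (fun _ => (1 : ℝ)) x}

/-- The Neumann form `E_N(φ) = sup {E_χ(φ) : χ ∈ C_Ω}` with domain `D(E)`. -/
noncomputable def neumann (E : DirichletForm μ) (Ω : Set X) (φ : X → ℝ) : ℝ :=
  sSup {r : ℝ | ∃ χ ∈ CSet E Ω, r = truncExt E χ φ}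

/-- The relaxation (lower semicontinuous regularisation) of the quadratic form `q`
with domain `dom`, as an `ℝ≥0∞`-valued function on `L₂`. -/
noncomputable def relaxVal (μ : Measure X) (dom : Set (X → ℝ)) (q : (X → ℝ) → ℝ)
    (φ : X → ℝ) : ℝ≥0∞ :=
  ⨅ (f : ℕ → X → ℝ) (_ : ∀ n, f n ∈ dom)
    (_ : Tendsto (fun n => eLpNorm (f n - φ) 2 μ) atTop (𝓝 0)),
    atTop.liminf fun n => ENNReal.ofReal (q (f n))

/-- The domain of the relaxation of `(dom, q)`. -/
def relaxDom (μ : Measure X) (dom : Set (X → ℝ)) (q : (X → ℝ) → ℝ) : Set (X → ℝ) :=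
  {φ | MemLp φ 2 μ ∧ relaxVal μ dom q φ ≠ ⊤}

/-- The quadratic form of the relaxation of `(dom, q)`. -/
noncomputable def relaxQ (μ : Measure X) (dom : Set (X → ℝ)) (q : (X → ℝ) → ℝ)
    (φ : X → ℝ) : ℝ :=
  (relaxVal μ dom q φ).toReal

/-- Closedness of a quadratic form `q` with domain `dom` on `L₂(X, μ)`. -/
def IsClosedForm (μ : Measure X) (dom : Set (X → ℝ)) (q : (X → ℝ) → ℝ) : Prop :=
  ∀ (f : ℕ → X → ℝ) (φ : X → ℝ), (∀ n, f n ∈ dom) → MemLp φ 2 μ →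
    Tendsto (fun n => eLpNorm (f n - φ) 2 μ) atTop (𝓝 0) →
    (∀ ε > 0, ∃ N, ∀ m ≥ N, ∀ n ≥ N, q (f m - f n) < ε) →
    φ ∈ dom ∧ Tendsto (fun n => q (f n - φ)) atTop (𝓝 0)

/-!
If `S = S^D` on `L₂(Ω)`, then for `χ ∈ D(E)` the energy quotients
`t⁻¹ (1_Ω χ, (I - S^D_t) 1_Ω χ)` coincide with those of `S`, and these are dominated by the
quotients of `χ` itself, so `1_Ω χ ∈ D(E_D)`. Choosing `χ ≥ 1` near a compact piece `K` of `∂Ω`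
and approximating `1_Ω χ` in the graph norm by some `f ∈ D_Ω`, the function `cut (1_Ω χ - f)`
equals `1` on `Ω` near `K` and has small graph norm, so `cap_Ω(K)` is arbitrarily small.
Covering `∂Ω` by countably many compact pieces and summing such functions with geometrically
decreasing graph norms gives admissible functions for `cap_Ω(∂Ω)` of arbitrarily small norm;
the sum lies in `D(E)` because `E` is closed.
-/

section L2

lemma eLpNorm_two_eq_ofReal_sqrt {f : X → ℝ} (hf : MemLp f 2 μ) :
    eLpNorm f 2 μ = ENNReal.ofReal √(∫ x, f x ^ 2 ∂μ) := by
  rw [hf.eLpNorm_eq_integral_rpow_norm two_ne_zero ofNat_ne_top, Real.sqrt_eq_rpow]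
  simp [Real.norm_eq_abs, one_div]

lemma eLpNorm_two_le_ofReal_iff {f : X → ℝ} (hf : MemLp f 2 μ) {c : ℝ} (hc : 0 ≤ c) :
    eLpNorm f 2 μ ≤ ENNReal.ofReal c ↔ ∫ x, f x ^ 2 ∂μ ≤ c ^ 2 := by
  rw [eLpNorm_two_eq_ofReal_sqrt hf, ENNReal.ofReal_le_ofReal_iff hc, Real.sqrt_le_left hc]

lemma integral_sq_le_of_eLpNorm_le {f g : X → ℝ} (hf : MemLp f 2 μ) (hg : MemLp g 2 μ)
    (h : eLpNorm g 2 μ ≤ eLpNorm f 2 μ) : ∫ x, g x ^ 2 ∂μ ≤ ∫ x, f x ^ 2 ∂μ := by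
  rwa [eLpNorm_two_eq_ofReal_sqrt hf, eLpNorm_two_eq_ofReal_sqrt hg,
    ENNReal.ofReal_le_ofReal_iff (Real.sqrt_nonneg _),
    Real.sqrt_le_sqrt_iff (integral_nonneg fun x => sq_nonneg _)] at h

lemma integral_mul_sub_mem_Icc {f g : X → ℝ} (hf : MemLp f 2 μ) (hg : MemLp g 2 μ)
    (h : eLpNorm g 2 μ ≤ eLpNorm f 2 μ) :
    ∫ x, f x * (f x - g x) ∂μ ∈ Icc 0 (2 * ∫ x, f x ^ 2 ∂μ) := by
  have hfg : Integrable (fun x => f x * g x) μ := hf.integrable_mul hg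
  have hsplit : ∫ x, f x * (f x - g x) ∂μ = ∫ x, f x ^ 2 ∂μ - ∫ x, f x * g x ∂μ := by
    rw [← integral_sub hf.integrable_sq hfg]
    exact integral_congr_ae (Eventually.of_forall fun x => by ring)
  have hamgm : |∫ x, f x * g x ∂μ| ≤ ∫ x, f x ^ 2 ∂μ := by
    calc |∫ x, f x * g x ∂μ| ≤ ∫ x, |f x * g x| ∂μ := abs_integral_le_integral_abs
      _ ≤ ∫ x, 2⁻¹ * (f x ^ 2 + g x ^ 2) ∂μ := by
        refine integral_mono hfg.abs
          ((hf.integrable_sq.add hg.integrable_sq).const_mul _) fun x => ?_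
        rw [abs_mul]
        nlinarith [sq_nonneg (|f x| - |g x|), sq_abs (f x), sq_abs (g x)]
      _ = 2⁻¹ * (∫ x, f x ^ 2 ∂μ + ∫ x, g x ^ 2 ∂μ) := by
        rw [integral_const_mul, integral_add hf.integrable_sq hg.integrable_sq]
      _ ≤ ∫ x, f x ^ 2 ∂μ := by linarith [integral_sq_le_of_eLpNorm_le hf hg h]
  rw [hsplit, mem_Icc]
  constructor <;> linarith [abs_le.mp hamgm]

lemma exists_tendsto_eLpNorm_sum_of_summable {p : ℝ≥0∞} [Fact (1 ≤ p)] {u : ℕ → X → ℝ}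
    (hu : ∀ k, MemLp (u k) p μ) {a : ℕ → ℝ} (ha : Summable a) (ha0 : ∀ k, 0 ≤ a k)
    (hua : ∀ k, eLpNorm (u k) p μ ≤ ENNReal.ofReal (a k)) :
    ∃ φ, MemLp φ p μ ∧
      Tendsto (fun N => eLpNorm (∑ k ∈ Finset.range N, u k - φ) p μ) atTop (𝓝 0) ∧
      eLpNorm φ p μ ≤ ENNReal.ofReal (∑' k, a k) := by
  set G : ℕ → Lp ℝ p μ := fun k => (hu k).toLp (u k)
  have hG : ∀ k, ‖G k‖ ≤ a k := fun k => by
    rw [Lp.norm_toLp]; exact ENNReal.toReal_le_of_le_ofReal (ha0 k) (hua k)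
  have hlim := (Summable.of_norm_bounded ha hG).hasSum.tendsto_sum_nat
  refine ⟨⇑(∑' k, G k), Lp.memLp _, ?_, ?_⟩
  · rw [Lp.tendsto_Lp_iff_tendsto_eLpNorm'] at hlim
    refine hlim.congr fun N => eLpNorm_congr_ae ?_
    filter_upwards [Lp.coeFn_fun_finsetSum (Finset.range N) G,
      ae_all_iff.mpr fun k => (hu k).coeFn_toLp] with x hx hux
    simp only [Pi.sub_apply, Finset.sum_apply, hx, G, hux]
  · rw [← ENNReal.ofReal_toReal (Lp.eLpNorm_ne_top (∑' k, G k)), ← Lp.norm_def]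
    exact ENNReal.ofReal_le_ofReal (tsum_of_norm_bounded ha.hasSum hG)

lemma ae_le_of_monotone_of_tendsto_eLpNorm {p : ℝ≥0∞} (hp : p ≠ 0) {g : ℕ → X → ℝ}
    (hmono : Monotone g) (hg : ∀ N, AEStronglyMeasurable (g N) μ) {φ : X → ℝ}
    (hφ : AEStronglyMeasurable φ μ)
    (hlim : Tendsto (fun N => eLpNorm (g N - φ) p μ) atTop (𝓝 0)) :
    ∀ᵐ x ∂μ, ∀ N, g N x ≤ φ x := by
  obtain ⟨ns, hns, hae⟩ :=
    (tendstoInMeasure_of_tendsto_eLpNorm hp hg hφ hlim).exists_seq_tendsto_ae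
  filter_upwards [hae] with x hx N
  exact ge_of_tendsto hx ((eventually_ge_atTop N).mono fun i hi =>
    hmono (hi.trans hns.le_apply) x)

end L2

lemma cut_nonneg {Y : Type*} (φ : Y → ℝ) (y : Y) : 0 ≤ cut φ y := le_max_left _ _

lemma cut_eq_one {Y : Type*} {φ : Y → ℝ} {y : Y} (h : 1 ≤ φ y) : cut φ y = 1 := by
  rw [cut, min_eq_right h, max_eq_right zero_le_one]

lemma cut_sq_le {Y : Type*} (φ : Y → ℝ) (y : Y) : cut φ y ^ 2 ≤ φ y ^ 2 := by
  have h : cut φ y ≤ |φ y| := max_le (abs_nonneg _) ((min_le_left _ _).trans (le_abs_self _))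
  simpa using sq_le_sq' ((neg_nonpos.2 (abs_nonneg _)).trans (cut_nonneg φ y)) h

namespace DirichletForm

variable (E : DirichletForm μ) {φ ψ : X → ℝ}

lemma neg_mem (hφ : φ ∈ E.dom) : -φ ∈ E.dom := by
  simpa using E.smul_mem (-1) φ hφ

lemma sub_mem (hφ : φ ∈ E.dom) (hψ : ψ ∈ E.dom) : φ - ψ ∈ E.dom := by
  simpa [sub_eq_add_neg] using E.add_mem φ hφ (-ψ) (E.neg_mem hψ)

lemma sum_mem {ι : Type*} {u : ι → X → ℝ} (hu : ∀ k, u k ∈ E.dom) (s : Finset ι) :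
    ∑ k ∈ s, u k ∈ E.dom := by
  classical
  induction s using Finset.induction_on with
  | empty => simpa using E.zero_mem
  | insert a s ha ih => rw [Finset.sum_insert ha]; exact E.add_mem _ (hu a) _ ih

lemma q_nonneg (hφ : φ ∈ E.dom) : 0 ≤ E.q φ := E.nonneg φ hφ

lemma form_add_right (hφ : φ ∈ E.dom) (hψ : ψ ∈ E.dom) {χ : X → ℝ} (hχ : χ ∈ E.dom) :
    E.form χ (φ + ψ) = E.form χ φ + E.form χ ψ := by
  rw [E.symm, E.add_left φ hφ ψ hψ χ hχ, E.symm χ φ, E.symm χ ψ]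

lemma form_smul_right (c : ℝ) (hφ : φ ∈ E.dom) (hψ : ψ ∈ E.dom) :
    E.form φ (c • ψ) = c * E.form φ ψ := by
  rw [E.symm, E.smul_left c ψ hψ φ hφ, E.symm]

lemma q_add (hφ : φ ∈ E.dom) (hψ : ψ ∈ E.dom) :
    E.q (φ + ψ) = E.q φ + 2 * E.form φ ψ + E.q ψ := by
  simp only [q]
  rw [E.add_left φ hφ ψ hψ _ (E.add_mem φ hφ ψ hψ), E.form_add_right hφ hψ hφ,
    E.form_add_right hφ hψ hψ, E.symm ψ φ]
  ring

lemma q_smul (c : ℝ) (hφ : φ ∈ E.dom) : E.q (c • φ) = c ^ 2 * E.q φ := by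
  simp only [q]
  rw [E.smul_left c φ hφ _ (E.smul_mem c φ hφ), E.form_smul_right c hφ hφ]
  ring

lemma q_zero : E.q 0 = 0 := by simpa using E.q_smul 0 E.zero_mem

lemma q_sub_comm (hφ : φ ∈ E.dom) (hψ : ψ ∈ E.dom) : E.q (φ - ψ) = E.q (ψ - φ) := by
  rw [← neg_sub φ ψ, ← neg_one_smul ℝ (φ - ψ), E.q_smul _ (E.sub_mem hφ hψ)]
  ring

lemma form_sq_le (hφ : φ ∈ E.dom) (hψ : ψ ∈ E.dom) :
    E.form φ ψ ^ 2 ≤ E.q φ * E.q ψ := by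
  have hquad : ∀ t : ℝ, 0 ≤ E.q ψ * (t * t) + 2 * E.form φ ψ * t + E.q φ := fun t => by
    have := E.q_nonneg (E.add_mem φ hφ _ (E.smul_mem t ψ hψ))
    rw [E.q_add hφ (E.smul_mem t ψ hψ), E.form_smul_right t hφ hψ, E.q_smul t hψ] at this
    linarith
  have := discrim_le_zero hquad
  rw [discrim] at this
  linarith

lemma sqrt_q_add_le (hφ : φ ∈ E.dom) (hψ : ψ ∈ E.dom) :
    √(E.q (φ + ψ)) ≤ √(E.q φ) + √(E.q ψ) := by
  have hcs : E.form φ ψ ≤ √(E.q φ) * √(E.q ψ) := by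
    rw [← Real.sqrt_mul (E.q_nonneg hφ)]
    exact (le_abs_self _).trans (Real.abs_le_sqrt (E.form_sq_le hφ hψ))
  rw [Real.sqrt_le_left (by positivity), E.q_add hφ hψ, add_sq,
    Real.sq_sqrt (E.q_nonneg hφ), Real.sq_sqrt (E.q_nonneg hψ)]
  linarith

lemma sqrt_q_sum_le {ι : Type*} {u : ι → X → ℝ} (hu : ∀ k, u k ∈ E.dom) (s : Finset ι) :
    √(E.q (∑ k ∈ s, u k)) ≤ ∑ k ∈ s, √(E.q (u k)) := by
  classical
  induction s using Finset.induction_on with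
  | empty => simp [E.q_zero]
  | insert a s ha ih =>
    rw [Finset.sum_insert ha, Finset.sum_insert ha]
    exact (E.sqrt_q_add_le (hu a) (E.sum_mem hu s)).trans (by linarith)

lemma integral_sq_le_graphNormSq (hφ : φ ∈ E.dom) : ∫ x, φ x ^ 2 ∂μ ≤ graphNormSq μ E.q φ :=
  le_add_of_nonneg_right (E.q_nonneg hφ)

lemma q_le_graphNormSq : E.q φ ≤ graphNormSq μ E.q φ :=
  le_add_of_nonneg_left (integral_nonneg fun _ => sq_nonneg _)

lemma graphNormSq_sub_comm (hφ : φ ∈ E.dom) (hψ : ψ ∈ E.dom) :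
    graphNormSq μ E.q (φ - ψ) = graphNormSq μ E.q (ψ - φ) := by
  simp only [graphNormSq, Pi.sub_apply, E.q_sub_comm hφ hψ]
  congr 1
  exact integral_congr_ae (Eventually.of_forall fun x => by ring)

lemma graphNormSq_cut_le (hφ : φ ∈ E.dom) :
    graphNormSq μ E.q (cut φ) ≤ graphNormSq μ E.q φ :=
  add_le_add (integral_mono (E.dom_memLp _ (E.markov φ hφ).1).integrable_sq
    (E.dom_memLp φ hφ).integrable_sq (cut_sq_le φ)) (E.markov φ hφ).2

lemma mem_dom_of_tendsto_sum {u : ℕ → X → ℝ} (hu : ∀ k, u k ∈ E.dom) {a : ℕ → ℝ}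
    (ha : Summable a) (ha0 : ∀ k, 0 ≤ a k) (hua : ∀ k, √(E.q (u k)) ≤ a k)
    {φ : X → ℝ} (hφ : MemLp φ 2 μ)
    (hlim : Tendsto (fun N => eLpNorm (∑ k ∈ Finset.range N, u k - φ) 2 μ) atTop (𝓝 0)) :
    φ ∈ E.dom ∧ E.q φ ≤ (∑' k, a k) ^ 2 := by
  set g : ℕ → X → ℝ := fun N => ∑ k ∈ Finset.range N, u k
  set s : ℕ → ℝ := fun N => ∑ k ∈ Finset.range N, a k
  have hg : ∀ N, g N ∈ E.dom := fun N => E.sum_mem hu _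
  have hdiff_of_le : ∀ m n, n ≤ m → √(E.q (g m - g n)) ≤ |s m - s n| := fun m n h => by
    simp only [g, s, ← Finset.sum_Ico_eq_sub _ h]
    exact (E.sqrt_q_sum_le hu _).trans
      ((Finset.sum_le_sum fun k _ => hua k).trans (le_abs_self _))
  have hdiff : ∀ m n, √(E.q (g m - g n)) ≤ |s m - s n| := fun m n => by
    rcases le_total n m with h | h
    · exact hdiff_of_le m n h
    · rw [E.q_sub_comm (hg m) (hg n), abs_sub_comm]
      exact hdiff_of_le n m h
  have hcauchy : ∀ ε > 0, ∃ N, ∀ m ≥ N, ∀ n ≥ N, E.q (g m - g n) < ε := fun ε hε => by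
    obtain ⟨N, hN⟩ := Metric.cauchySeq_iff.mp ha.hasSum.tendsto_sum_nat.cauchySeq
      (√ε) (Real.sqrt_pos.mpr hε)
    refine ⟨N, fun m hm n hn => ?_⟩
    rw [← Real.sqrt_lt_sqrt_iff (E.q_nonneg (E.sub_mem (hg m) (hg n)))]
    exact (hdiff m n).trans_lt (hN m hm n hn)
  obtain ⟨hφdom, hq⟩ := E.closed g φ hg hφ hlim hcauchy
  refine ⟨hφdom, (Real.sqrt_le_left (tsum_nonneg ha0)).mp ?_⟩
  have hbound : ∀ N, √(E.q φ) ≤ ∑' k, a k + √(E.q (g N - φ)) := fun N =>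
    calc √(E.q φ) = √(E.q (g N + (φ - g N))) := by rw [add_sub_cancel]
      _ ≤ √(E.q (g N)) + √(E.q (φ - g N)) :=
        E.sqrt_q_add_le (hg N) (E.sub_mem hφdom (hg N))
      _ ≤ ∑' k, a k + √(E.q (g N - φ)) := by
        rw [E.q_sub_comm hφdom (hg N)]
        gcongr
        exact (E.sqrt_q_sum_le hu _).trans ((Finset.sum_le_sum fun k _ => hua k).trans
          (ha.sum_le_tsum _ fun k _ => ha0 k))
  have hlim' : Tendsto (fun N => ∑' k, a k + √(E.q (g N - φ))) atTop (𝓝 (∑' k, a k)) := by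
    simpa [q] using tendsto_const_nhds.add ((Real.continuous_sqrt.tendsto 0).comp hq)
  exact ge_of_tendsto' hlim' hbound

theorem exists_tendsto_sum_of_graphNormSq_le {u : ℕ → X → ℝ} (hu : ∀ k, u k ∈ E.dom)
    {a : ℕ → ℝ} (ha : Summable a) (ha0 : ∀ k, 0 ≤ a k)
    (hua : ∀ k, graphNormSq μ E.q (u k) ≤ a k ^ 2) :
    ∃ φ ∈ E.dom,
      Tendsto (fun N => eLpNorm (∑ k ∈ Finset.range N, u k - φ) 2 μ) atTop (𝓝 0) ∧
      graphNormSq μ E.q φ ≤ 2 * (∑' k, a k) ^ 2 := by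
  obtain ⟨φ, hφ, hlim, hφa⟩ := exists_tendsto_eLpNorm_sum_of_summable
    (fun k => E.dom_memLp _ (hu k)) ha ha0 fun k =>
      (eLpNorm_two_le_ofReal_iff (E.dom_memLp _ (hu k)) (ha0 k)).mpr
        ((E.integral_sq_le_graphNormSq (hu k)).trans (hua k))
  obtain ⟨hφdom, hφq⟩ := E.mem_dom_of_tendsto_sum hu ha ha0
    (fun k => (Real.sqrt_le_left (ha0 k)).mpr ((E.q_le_graphNormSq).trans (hua k))) hφ hlim
  have hφL2 := (eLpNorm_two_le_ofReal_iff hφ (tsum_nonneg ha0)).mp hφa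
  exact ⟨φ, hφdom, hlim, by rw [graphNormSq]; linarith⟩

end DirichletForm

lemma bddAbove_inv_mul_of_le {I A : ℝ → ℝ} {L C : ℝ}
    (hA : Tendsto (fun t => t⁻¹ * A t) (𝓝[>] 0) (𝓝 L)) (hIA : ∀ t > 0, I t ≤ A t)
    (hIC : ∀ t > 0, I t ≤ C) : BddAbove {r | ∃ t > 0, r = t⁻¹ * I t} := by
  obtain ⟨δ, hδ, hsmall⟩ :=
    mem_nhdsGT_iff_exists_Ioo_subset.mp (hA (Iio_mem_nhds (lt_add_one L)))
  refine ⟨max (L + 1) (δ⁻¹ * max C 0), ?_⟩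
  rintro _ ⟨t, ht, rfl⟩
  rcases lt_or_ge t δ with htδ | hδt
  · exact le_max_of_le_left ((mul_le_mul_of_nonneg_left (hIA t ht) (inv_nonneg.2 ht.le)).trans
      (hsmall ⟨ht, htδ⟩).le)
  · refine le_max_of_le_right ?_
    calc t⁻¹ * I t ≤ t⁻¹ * max C 0 :=
          mul_le_mul_of_nonneg_left ((hIC t ht).trans (le_max_left _ _)) (inv_nonneg.2 ht.le)
      _ ≤ δ⁻¹ * max C 0 := mul_le_mul_of_nonneg_right (inv_anti₀ hδ hδt) (le_max_right _ _)

section Semigroup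

variable {Ω : Set X} {dom : Set (X → ℝ)} {q : (X → ℝ) → ℝ} {S : ℝ → (X → ℝ) → (X → ℝ)}

/-- Write `χ = 1_Ω χ + 1_{Ωᶜ} χ`. The cross terms vanish because `S_t (1_Ω χ)` lives on `Ω`
(and `S_t` is symmetric), and the `Ωᶜ` part contributes a nonnegative amount since `S_t` is
a contraction. -/
lemma IsSubmarkovSemigroupOn.integral_indicator_mul_sub_le
    (hS : IsSubmarkovSemigroupOn μ univ dom q S) {t : ℝ} (ht : 0 < t) (hΩ : MeasurableSet Ω)
    {χ : X → ℝ} (hχ : MemLp χ 2 μ)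
    (hsupp : S t (Ω.indicator χ) =ᵐ[μ] Ω.indicator (S t (Ω.indicator χ))) :
    ∫ x, Ω.indicator χ x * (Ω.indicator χ x - S t (Ω.indicator χ) x) ∂μ ≤
      ∫ x, χ x * (χ x - S t χ x) ∂μ := by
  set ψ := Ω.indicator χ
  set η := Ωᶜ.indicator χ
  have hψ : MemLp ψ 2 μ := hχ.indicator hΩ
  have hη : MemLp η 2 μ := hχ.indicator hΩ.compl
  have hSψ := hS.memLp t ht ψ hψ
  have hSη := hS.memLp t ht η hη
  have hχψη : χ = ψ + η := (indicator_self_add_compl Ω χ).symm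
  have hSχ := hS.map_add t ht ψ η hψ hη
  rw [← hχψη] at hSχ
  have hηSψ : ∀ᵐ x ∂μ, η x * S t ψ x = 0 := by
    filter_upwards [hsupp] with x hx
    by_cases hxΩ : x ∈ Ω
    · simp [η, hxΩ]
    · simp [hx, hxΩ]
  have hcross : ∫ x, ψ x * S t η x ∂μ = 0 := by
    rw [integral_congr_ae (Eventually.of_forall fun x => mul_comm (ψ x) (S t η x)),
      hS.symmetric t ht η ψ hη hψ, integral_congr_ae hηSψ, integral_zero]
  have hsplit : (fun x => χ x * (χ x - S t χ x)) =ᵐ[μ]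
      fun x => ψ x * (ψ x - S t ψ x) + η x * (η x - S t η x) - ψ x * S t η x := by
    filter_upwards [hSχ, hηSψ] with x hSx hx
    have hψη : ψ x * η x = 0 := by by_cases hxΩ : x ∈ Ω <;> simp [ψ, η, hxΩ]
    rw [hSx, congr_fun hχψη x, Pi.add_apply, Pi.add_apply]
    linear_combination 2 * hψη - hx
  have hIψ : Integrable (fun x => ψ x * (ψ x - S t ψ x)) μ := hψ.integrable_mul (hψ.sub hSψ)
  have hIη : Integrable (fun x => η x * (η x - S t η x)) μ := hη.integrable_mul (hη.sub hSη)
  have hIψη : Integrable (fun x => ψ x * S t η x) μ := hψ.integrable_mul hSη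
  have hIsum : Integrable (fun x => ψ x * (ψ x - S t ψ x) + η x * (η x - S t η x)) μ :=
    hIψ.add hIη
  rw [integral_congr_ae hsplit, integral_sub hIsum hIψη, integral_add hIψ hIη, hcross]
  linarith [(integral_mul_sub_mem_Icc hη hSη (hS.contraction t ht η hη)).1]

theorem exists_mem_dom_ae_eq_indicator {dom' : Set (X → ℝ)} {q' : (X → ℝ) → ℝ}
    {SD : ℝ → (X → ℝ) → (X → ℝ)} (hS : IsSubmarkovSemigroupOn μ univ dom q S)
    (hSD : IsSubmarkovSemigroupOn μ Ω dom' q' SD)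
    (heq : ∀ t > 0, ∀ φ : X → ℝ, MemL2 μ Ω φ → S t φ =ᵐ[μ] SD t φ) (hΩ : MeasurableSet Ω)
    {χ : X → ℝ} (hχ : χ ∈ dom) (hχ2 : MemLp χ 2 μ) :
    ∃ ψ ∈ dom', Ω.indicator χ =ᵐ[μ] ψ := by
  set ψ := Ω.indicator χ
  have hψ : MemL2 μ Ω ψ :=
    ⟨hχ2.indicator hΩ, EventuallyEq.of_eq (by rw [indicator_indicator, inter_self])⟩
  have hquot : ∀ t > 0, ∫ x, ψ x * (ψ x - SD t ψ x) ∂μ = ∫ x, ψ x * (ψ x - S t ψ x) ∂μ :=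
    fun t ht => integral_congr_ae (by filter_upwards [heq t ht ψ hψ] with x hx; rw [hx])
  have hsupp : ∀ t > 0, S t ψ =ᵐ[μ] Ω.indicator (S t ψ) := fun t ht => by
    filter_upwards [heq t ht ψ hψ, hSD.supported t ht ψ hψ.1] with x hx hxD
    by_cases hxΩ : x ∈ Ω
    · rw [indicator_of_mem hxΩ]
    · rw [indicator_of_notMem hxΩ, hx, hxD, indicator_of_notMem hxΩ]
  obtain ⟨ψ', hψ', hψψ'⟩ := (hSD.mem_dom_iff ψ hψ.1 hψ.2).mpr <|
    bddAbove_inv_mul_of_le (hS.form_eq χ hχ)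
      (fun t ht => (hquot t ht).trans_le
        (hS.integral_indicator_mul_sub_le ht hΩ hχ2 (hsupp t ht)))
      (fun t ht => (hquot t ht).trans_le (integral_mul_sub_mem_Icc hψ.1
        (hS.memLp t ht ψ hψ.1) (hS.contraction t ht ψ hψ.1)).2)
  exact ⟨ψ', hψ', hψψ'⟩

end Semigroup

section Capacity

variable [TopologicalSpace X]

def IsRelCapAdmissible (μ : Measure X) (dom : Set (X → ℝ)) (Ω A : Set X) (φ : X → ℝ) :
    Prop :=
  φ ∈ dom ∧ ∃ V : Set X, IsOpen V ∧ A ⊆ V ∧ ∀ᵐ x ∂μ, x ∈ V ∩ Ω → 1 ≤ φ x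

variable {dom : Set (X → ℝ)} {Ω A B : Set X} {φ : X → ℝ}

lemma IsRelCapAdmissible.relCap_le (q : (X → ℝ) → ℝ) (h : IsRelCapAdmissible μ dom Ω A φ) :
    relCap μ dom q Ω A ≤ ENNReal.ofReal (graphNormSq μ q φ) := by
  obtain ⟨hφ, V, hV, hAV, hφV⟩ := h
  exact sInf_le ⟨φ, hφ, V, hV, hAV, hφV, rfl⟩

lemma relCap_eq_zero_of_forall_exists {q : (X → ℝ) → ℝ}
    (h : ∀ ε > 0, ∃ φ, IsRelCapAdmissible μ dom Ω A φ ∧ graphNormSq μ q φ ≤ ε) :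
    relCap μ dom q Ω A = 0 := by
  refine le_antisymm (ENNReal.le_of_forall_pos_le_add fun ε hε _ => ?_) bot_le
  obtain ⟨φ, hφ, hφε⟩ := h ε hε
  simpa using (hφ.relCap_le q).trans (ENNReal.ofReal_le_ofReal hφε)

lemma IsRelCapAdmissible.mono (h : IsRelCapAdmissible μ dom Ω A φ) (hBA : B ⊆ A) :
    IsRelCapAdmissible μ dom Ω B φ := by
  obtain ⟨hφ, V, hV, hAV, hφV⟩ := h
  exact ⟨hφ, V, hV, hBA.trans hAV, hφV⟩

lemma IsRelCapAdmissible.iUnion {A : ℕ → Set X} {u : ℕ → X → ℝ}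
    (hu : ∀ m, IsRelCapAdmissible μ dom Ω (A m) (u m)) (hφ : φ ∈ dom)
    (hle : ∀ᵐ x ∂μ, ∀ m, u m x ≤ φ x) : IsRelCapAdmissible μ dom Ω (⋃ m, A m) φ := by
  choose V hVo hAV hV using fun m => (hu m).2
  refine ⟨hφ, ⋃ m, V m, isOpen_iUnion hVo, iUnion_mono hAV, ?_⟩
  filter_upwards [hle, ae_all_iff.mpr hV] with x hx hxV ⟨hxU, hxΩ⟩
  obtain ⟨m, hm⟩ := mem_iUnion.mp hxU
  exact (hxV m ⟨hm, hxΩ⟩).trans (hx m)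

lemma DenseInC0.exists_mem_dom_one_le [RegularSpace X] [LocallyCompactSpace X]
    {E : DirichletForm μ} (hE : DenseInC0 E) {K : Set X} (hK : IsCompact K) :
    ∃ χ ∈ E.dom, ∃ W, IsOpen W ∧ K ⊆ W ∧ ∀ x ∈ W, 1 ≤ χ x := by
  obtain ⟨g, hgK, -, hg, -⟩ :=
    exists_continuous_one_zero_of_isCompact hK isClosed_empty (disjoint_empty K)
  obtain ⟨φ, hφ, hφc, -, hφg⟩ := hE g g.continuous hg.is_zero_at_infty (1 / 2) (by norm_num)
  refine ⟨(2 : ℝ) • φ, E.smul_mem 2 φ hφ, {x | 1 / 2 < φ x},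
    isOpen_lt continuous_const hφc, fun x hx => ?_, fun x hx => ?_⟩
  · have := abs_lt.mp (hφg x)
    rw [hgK hx, Pi.one_apply] at this
    show 1 / 2 < φ x
    linarith
  · have hx : 1 / 2 < φ x := hx
    simp only [Pi.smul_apply, smul_eq_mul]
    linarith

lemma exists_cut_admissible {E : DirichletForm μ} {W : Set X} (hW : IsOpen W)
    {χ ψ : X → ℝ} (hψ : ψ ∈ E.domD Ω) (hχψ : Ω.indicator χ =ᵐ[μ] ψ)
    (hχW : ∀ x ∈ W, 1 ≤ χ x) {δ : ℝ} (hδ : 0 < δ) :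
    ∃ u, IsRelCapAdmissible μ E.dom Ω (W \ Ω) u ∧ 0 ≤ u ∧ graphNormSq μ E.q u < δ := by
  obtain ⟨hψdom, f, hf, hlim⟩ := hψ
  obtain ⟨n, hn⟩ := (hlim.eventually_lt_const hδ).exists
  obtain ⟨hfdom, -, hfΩ⟩ := hf n
  have hw : ψ - f n ∈ E.dom := E.sub_mem hψdom hfdom
  refine ⟨cut (ψ - f n), ⟨(E.markov _ hw).1, W \ tsupport (f n),
    hW.sdiff (isClosed_tsupport _), sdiff_subset_sdiff_right hfΩ, ?_⟩, cut_nonneg _, ?_⟩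
  · filter_upwards [hχψ] with x hx ⟨⟨hxW, hxf⟩, hxΩ⟩
    refine (cut_eq_one ?_).ge
    rw [Pi.sub_apply, image_eq_zero_of_notMem_tsupport hxf, sub_zero, ← hx,
      indicator_of_mem hxΩ]
    exact hχW x hxW
  · calc graphNormSq μ E.q (cut (ψ - f n)) ≤ graphNormSq μ E.q (ψ - f n) :=
          E.graphNormSq_cut_le hw
      _ = graphNormSq μ E.q (f n - ψ) := E.graphNormSq_sub_comm hψdom hfdom
      _ < δ := hn

theorem exists_admissible_of_isCompact [RegularSpace X] [LocallyCompactSpace X]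
    [OpensMeasurableSpace X] {E : DirichletForm μ} (hdense : DenseInC0 E) (hΩ : IsOpen Ω)
    {S SD : ℝ → (X → ℝ) → (X → ℝ)} (hS : IsSubmarkovSemigroupOn μ univ E.dom E.q S)
    (hSD : IsSubmarkovSemigroupOn μ Ω (E.domD Ω) E.q SD)
    (heq : ∀ t > 0, ∀ φ : X → ℝ, MemL2 μ Ω φ → S t φ =ᵐ[μ] SD t φ)
    {K : Set X} (hK : IsCompact K) (hKΩ : Disjoint K Ω) {δ : ℝ} (hδ : 0 < δ) :
    ∃ u, IsRelCapAdmissible μ E.dom Ω K u ∧ 0 ≤ u ∧ graphNormSq μ E.q u < δ := by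
  obtain ⟨χ, hχ, W, hW, hKW, hχW⟩ := hdense.exists_mem_dom_one_le hK
  obtain ⟨ψ, hψ, hχψ⟩ :=
    exists_mem_dom_ae_eq_indicator hS hSD heq hΩ.measurableSet hχ (E.dom_memLp χ hχ)
  obtain ⟨u, hu, hu0, huδ⟩ := exists_cut_admissible hW hψ hχψ hχW hδ
  exact ⟨u, hu.mono (subset_sdiff.mpr ⟨hKW, hKΩ⟩), hu0, huδ⟩

end Capacity

section Statements

variable [MetricSpace X] [BorelSpace X] [LocallyCompactSpace X] [SigmaCompactSpace X]
variable {μ : Measure X} [Measure.Regular μ] [Measure.IsOpenPosMeasure μ]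

theorem statement1_general (E : DirichletForm μ) (hdense : DenseInC0 E)
    (Ω : Set X) (hΩ : IsOpen Ω) (S SD : ℝ → (X → ℝ) → (X → ℝ))
    (hS : IsSubmarkovSemigroupOn μ Set.univ E.dom E.q S)
    (hSD : IsSubmarkovSemigroupOn μ Ω (E.domD Ω) E.q SD)
    (heq : ∀ t > 0, ∀ φ : X → ℝ, MemL2 μ Ω φ → S t φ =ᵐ[μ] SD t φ) :
    relCap μ E.dom E.q Ω (frontier Ω) = 0 := by
  refine relCap_eq_zero_of_forall_exists fun ε hε => ?_
  set a : ℕ → ℝ := fun k => √(ε / 2) / 2 / 2 ^ k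
  have ha0 : ∀ k, 0 ≤ a k := fun k => by positivity
  have hK : ∀ m, IsCompact (frontier Ω ∩ compactCovering X m) := fun m =>
    (isCompact_compactCovering X m).inter_left isClosed_frontier
  have hKΩ : ∀ m, Disjoint (frontier Ω ∩ compactCovering X m) Ω := fun m =>
    (disjoint_frontier_iff_isOpen.mpr hΩ).mono_left inter_subset_left
  choose u hu hu0 hua using fun m =>
    exists_admissible_of_isCompact hdense hΩ hS hSD heq (hK m) (hKΩ m)
      (by positivity : 0 < a m ^ 2)
  obtain ⟨φ, hφ, hlim, hφa⟩ := E.exists_tendsto_sum_of_graphNormSq_le (fun m => (hu m).1)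
    (summable_geometric_two' _) ha0 fun m => (hua m).le
  have hle := ae_le_of_monotone_of_tendsto_eLpNorm two_ne_zero
    (fun M N hMN => Finset.sum_le_sum_of_subset_of_nonneg (Finset.range_mono hMN)
      fun k _ _ => hu0 k)
    (fun N => (E.dom_memLp _ (E.sum_mem (fun m => (hu m).1) _)).1) (E.dom_memLp φ hφ).1 hlim
  refine ⟨φ, ?_, ?_⟩
  · have := IsRelCapAdmissible.iUnion hu hφ <| hle.mono fun x hx m =>
      (Finset.single_le_sum (fun k _ => hu0 k) (Finset.self_mem_range_succ m) x).trans (hx (m + 1))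
    rwa [← inter_iUnion, iUnion_compactCovering, inter_univ] at this
  · rw [tsum_geometric_two', Real.sq_sqrt (by positivity)] at hφa
    linarith

/-- If `S_t φ = S^D_t φ` for all `φ ∈ L₂(Ω)` and `t > 0` then `cap_Ω(∂Ω) = 0`. -/
theorem statement1 (E : DirichletForm μ) (hloc : IsLocal E) (hdense : DenseInC0 E)
    (Ω : Set X) (hΩ : IsOpen Ω) (S SD : ℝ → (X → ℝ) → (X → ℝ))
    (hS : IsSubmarkovSemigroupOn μ Set.univ E.dom E.q S)
    (hSD : IsSubmarkovSemigroupOn μ Ω (E.domD Ω) E.q SD)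
    (heq : ∀ t > 0, ∀ φ : X → ℝ, MemL2 μ Ω φ → S t φ =ᵐ[μ] SD t φ) :
    relCap μ E.dom E.q Ω (frontier Ω) = 0 :=
  statement1_general E hdense Ω hΩ S SD hS hSD heq

end Statements

end DirichletPaper
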